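/- The map f:ℕ→ℕ defined by f(n)=⌊φn⌋+1 if n∈A and f(n)=⌊(φ−1)n⌋ if n∈B is a well-defined bijection of ℕ onto itself satisfying f(f(n))=n for all n∈ℕ and f≠id; that is, f is a permutation of ℕ of order 2. -/

import Mathlib

/-- The golden ratio φ = (1 + √5)/2. -/
noncomputable def phi : ℝ := (1 + Real.sqrt 5) / 2

/-- The lower Wythoff sequence a(n) = ⌊nφ⌋. -/
noncomputable def wa (n : ℕ) : ℕ := ⌊(n : ℝ) * phi⌋₊

/-- The upper Wythoff sequence b(n) = ⌊nφ²⌋. -/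
noncomputable def wb (n : ℕ) : ℕ := ⌊(n : ℝ) * phi ^ 2⌋₊

/-- A = range of the lower Wythoff sequence. -/
def WA : Set ℕ := {m | ∃ n : ℕ, 0 < n ∧ wa n = m}

/-- B = range of the upper Wythoff sequence. -/
def WB : Set ℕ := {m | ∃ n : ℕ, 0 < n ∧ wb n = m}

open scoped Classical in
/-- f(n) = ⌊φn⌋+1 if n ∈ A, and f(n) = ⌊(φ−1)n⌋ if n ∈ B. -/
noncomputable def f (n : ℕ) : ℕ :=
  if n ∈ WA then wa n + 1 else ⌊(phi - 1) * (n : ℝ)⌋₊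

/-!
With `r = fract (m φ)`, which lies in `(0, 1)` because `φ` is irrational, `φ² = φ + 1` gives
`a(m) φ = b(m) - r (φ - 1)` and `(φ - 1) b(m) = a(m) + r (2 - φ)`, so `f (a m) = b m` and
`f (b m) = a m`. By Rayleigh's theorem (`φ⁻¹ + φ⁻² = 1`) every positive integer lies in exactly one
of `A`, `B`, so `f` is an involution of the positive integers; and `f 1 = 2`.
-/

open Real

lemma phi_pos : 0 < phi := goldenRatio_pos

lemma one_lt_phi : 1 < phi := one_lt_goldenRatio

lemma phi_lt_two : phi < 2 := goldenRatio_lt_two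

lemma phi_sq : phi ^ 2 = phi + 1 := goldenRatio_sq

lemma irrational_phi : Irrational phi := goldenRatio_irrational

lemma holderConjugate_phi_phi_sq : phi.HolderConjugate (phi ^ 2) := by
  rw [holderConjugate_iff]
  refine ⟨one_lt_phi, ?_⟩
  field_simp [phi_pos.ne']
  linear_combination -phi_sq

lemma fract_natCast_mul_phi_pos {m : ℕ} (hm : 0 < m) : 0 < Int.fract ((m : ℝ) * phi) :=
  Int.fract_pos.2 fun h => (irrational_phi.natCast_mul hm.ne').ne_int _ h

lemma natCast_wa (m : ℕ) : (wa m : ℝ) = m * phi - Int.fract ((m : ℝ) * phi) := by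
  rw [Int.fract, sub_sub_cancel, wa,
    ← Int.natCast_floor_eq_floor (mul_nonneg m.cast_nonneg phi_pos.le), Int.cast_natCast]

lemma wb_eq_wa_add (m : ℕ) : wb m = wa m + m := by
  rw [wb, wa, phi_sq, mul_add, mul_one,
    Nat.floor_add_natCast (mul_nonneg m.cast_nonneg phi_pos.le)]

lemma wa_wa_add_one {m : ℕ} (hm : 0 < m) : wa (wa m) + 1 = wb m := by
  have hr := fract_natCast_mul_phi_pos hm
  have hr1 := Int.fract_lt_one ((m : ℝ) * phi)
  have h1 := one_lt_phi
  have h2 := phi_lt_two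
  have hwb : (wb m : ℝ) = wa m + m := by exact_mod_cast wb_eq_wa_add m
  have key : (wa m : ℝ) * phi = wb m - Int.fract ((m : ℝ) * phi) * (phi - 1) := by
    rw [hwb, natCast_wa]; linear_combination (m : ℝ) * phi_sq
  have hwb1 : 1 ≤ wb m := by rw [wb_eq_wa_add]; omega
  suffices wa (wa m) = wb m - 1 by omega
  rw [wa, Nat.floor_eq_iff (by positivity), Nat.cast_sub hwb1, key]
  constructor <;> push_cast <;> nlinarith

lemma floor_phi_sub_one_mul_wb {m : ℕ} (hm : 0 < m) : ⌊(phi - 1) * (wb m : ℝ)⌋₊ = wa m := by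
  have hr := fract_natCast_mul_phi_pos hm
  have hr1 := Int.fract_lt_one ((m : ℝ) * phi)
  have h1 := one_lt_phi
  have h2 := phi_lt_two
  have hwb : (wb m : ℝ) = wa m + m := by exact_mod_cast wb_eq_wa_add m
  have key : (phi - 1) * (wb m : ℝ) = wa m + Int.fract ((m : ℝ) * phi) * (2 - phi) := by
    rw [hwb, natCast_wa]; linear_combination (m : ℝ) * phi_sq
  rw [Nat.floor_eq_iff (by nlinarith), key]
  constructor <;> nlinarith

lemma natCast_mem_beattySeq_pos_iff {r : ℝ} (hr : 0 ≤ r) {n : ℕ} :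
    (n : ℤ) ∈ {beattySeq r k | k > 0} ↔ ∃ k : ℕ, 0 < k ∧ ⌊(k : ℝ) * r⌋₊ = n := by
  constructor
  · rintro ⟨k, hk, hkn⟩
    lift k to ℕ using hk.le
    refine ⟨k, by exact_mod_cast hk, ?_⟩
    rw [beattySeq, Int.cast_natCast, ← Int.natCast_floor_eq_floor (by positivity)] at hkn
    exact_mod_cast hkn
  · rintro ⟨k, hk, hkn⟩
    refine ⟨k, by exact_mod_cast hk, ?_⟩
    rw [beattySeq, Int.cast_natCast, ← Int.natCast_floor_eq_floor (by positivity), hkn]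

open scoped symmDiff in
lemma mem_WA_iff_notMem_WB {n : ℕ} (hn : 0 < n) : n ∈ WA ↔ n ∉ WB := by
  have hpart := irrational_phi.beattySeq_symmDiff_beattySeq_pos holderConjugate_phi_phi_sq
  have hn' : (n : ℤ) ∈ {beattySeq phi k | k > 0} ∆ {beattySeq (phi ^ 2) k | k > 0} := by
    rw [hpart]; exact Int.natCast_pos.2 hn
  rw [Set.mem_symmDiff, natCast_mem_beattySeq_pos_iff phi_pos.le,
    natCast_mem_beattySeq_pos_iff (sq_nonneg _)] at hn'
  exact xor_iff_iff_not.1 hn'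

lemma wb_pos {m : ℕ} (hm : 0 < m) : 0 < wb m := by
  rw [wb_eq_wa_add]; omega

lemma wa_pos {m : ℕ} (hm : 0 < m) : 0 < wa m :=
  Nat.floor_pos.2 (one_le_mul_of_one_le_of_one_le (by exact_mod_cast hm) one_lt_phi.le)

lemma f_wa {m : ℕ} (hm : 0 < m) : f (wa m) = wb m := by
  rw [f, if_pos ⟨m, hm, rfl⟩, wa_wa_add_one hm]

lemma f_wb {m : ℕ} (hm : 0 < m) : f (wb m) = wa m := by
  have hnotA : wb m ∉ WA := by
    rw [mem_WA_iff_notMem_WB (wb_pos hm), not_not]; exact ⟨m, hm, rfl⟩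
  rw [f, if_neg hnotA, floor_phi_sub_one_mul_wb hm]

lemma mem_WA_or_mem_WB {n : ℕ} (hn : 0 < n) : n ∈ WA ∨ n ∈ WB :=
  or_iff_not_imp_left.2 fun hA => not_not.1 (mt (mem_WA_iff_notMem_WB hn).2 hA)

lemma f_f {n : ℕ} (hn : 0 < n) : f (f n) = n := by
  obtain ⟨m, hm, rfl⟩ | ⟨m, hm, rfl⟩ := mem_WA_or_mem_WB hn
  · rw [f_wa hm, f_wb hm]
  · rw [f_wb hm, f_wa hm]

lemma f_pos {n : ℕ} (hn : 0 < n) : 0 < f n := by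
  obtain ⟨m, hm, rfl⟩ | ⟨m, hm, rfl⟩ := mem_WA_or_mem_WB hn
  · rw [f_wa hm]; exact wb_pos hm
  · rw [f_wb hm]; exact wa_pos hm

lemma wa_one : wa 1 = 1 := by
  rw [wa, Nat.floor_eq_iff (by simpa using phi_pos.le)]
  constructor <;> push_cast <;> linarith [one_lt_phi, phi_lt_two]

lemma f_one : f 1 = 2 := by
  rw [← wa_one, f_wa one_pos, wb_eq_wa_add, wa_one]
  rfl

theorem stmt_7 :
    Set.BijOn f {n : ℕ | 0 < n} {n : ℕ | 0 < n} ∧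
    (∀ n : ℕ, 0 < n → f (f n) = n) ∧
    (∃ n : ℕ, 0 < n ∧ f n ≠ n) := by
  have hmaps : Set.MapsTo f {n : ℕ | 0 < n} {n : ℕ | 0 < n} := fun _ => f_pos
  refine ⟨Set.InvOn.bijOn ⟨fun _ => f_f, fun _ => f_f⟩ hmaps hmaps, fun _ => f_f, 1, one_pos, ?_⟩
  rw [f_one]; decide
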